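/- arXiv:2502.16870 — 4 statements merged into one kernel-verified Lean document; each statement's English description precedes it below -/
import Mathlib

section
/- Suppose for each t ∈ {1,...,T}, 0 ≤ s_t ≤ 1 and Σ_{t=1}^{T} (1/2) log(1 + s_t/σ²) ≤ γ, where σ² > 0. Then Σ_{t=1}^{T} s_t ≤ C₁ γ, where C₁ = 2/log(1 + σ⁻²). -/
/-- if each `s_t ∈ [0,1]` and the cumulative information gain
`Σ (1/2)·log(1 + s_t/σ²)` is at most `γ`, then `Σ s_t ≤ C₁·γ` with `C₁ = 2/log(1+σ⁻²)`. -/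
theorem stmt_5 (T : ℕ) (σsq γ : ℝ) (hσsq : 0 < σsq) (s : ℕ → ℝ)
    (hs : ∀ t ∈ Finset.Icc 1 T, 0 ≤ s t ∧ s t ≤ 1)
    (hγ : ∑ t ∈ Finset.Icc 1 T, (1 / 2 : ℝ) * Real.log (1 + s t / σsq) ≤ γ) :
    ∑ t ∈ Finset.Icc 1 T, s t ≤ (2 / Real.log (1 + σsq⁻¹)) * γ := by
  have hinv : 0 < σsq⁻¹ := inv_pos.mpr hσsq
  have hlogpos : 0 < Real.log (1 + σsq⁻¹) := Real.log_pos (by linarith)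
  have key : ∀ t ∈ Finset.Icc 1 T,
      s t ≤ (2 / Real.log (1 + σsq⁻¹)) * ((1 / 2 : ℝ) * Real.log (1 + s t / σsq)) := by
    intro t ht
    obtain ⟨h0, h1⟩ := hs t ht
    have hb : (1 + σsq⁻¹) ^ (s t) ≤ 1 + s t * σsq⁻¹ :=
      rpow_one_add_le_one_add_mul_self (by linarith) h0 h1
    have hlog : s t * Real.log (1 + σsq⁻¹) ≤ Real.log (1 + s t * σsq⁻¹) := by
      rw [← Real.log_rpow (by linarith)]
      exact Real.log_le_log (by positivity) hb
    have hdiv : s t / σsq = s t * σsq⁻¹ := div_eq_mul_inv _ _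
    rw [hdiv, div_mul_eq_mul_div, le_div_iff₀ hlogpos]
    nlinarith [hlog]
  calc ∑ t ∈ Finset.Icc 1 T, s t
      ≤ ∑ t ∈ Finset.Icc 1 T, (2 / Real.log (1 + σsq⁻¹)) *
          ((1 / 2 : ℝ) * Real.log (1 + s t / σsq)) := Finset.sum_le_sum key
    _ = (2 / Real.log (1 + σsq⁻¹)) *
          ∑ t ∈ Finset.Icc 1 T, (1 / 2 : ℝ) * Real.log (1 + s t / σsq) := by
        rw [Finset.mul_sum]
    _ ≤ (2 / Real.log (1 + σsq⁻¹)) * γ := by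
        apply mul_le_mul_of_nonneg_left hγ (by positivity)
end

section
/- Combining the greedy selection bound with the information-gain bound: under the hypotheses of the previous two statements, if the selected points satisfy Σ_{t=1}^{T} (1/2) log(1 + v_{t-1}(x_t)/σ²) ≤ γ_T with σ² > 0, then ⨆_{p∈P} ∫ v_T dp ≤ C₁ γ_T / T where C₁ = 2/log(1+σ⁻²). -/
open MeasureTheory

/-- Key scalar inequality: for `s ∈ [0,1]` and `c > 0`, `s * log(1+c) ≤ log(1+s*c)`. -/
lemma key_log_ineq {s c : ℝ} (hs0 : 0 ≤ s) (hs1 : s ≤ 1) (hc : 0 < c) :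
    s * Real.log (1 + c) ≤ Real.log (1 + s * c) := by
  have h1c : (0:ℝ) < 1 + c := by linarith
  have hb : (1 + c) ^ s ≤ 1 + s * c := by
    have := rpow_one_add_le_one_add_mul_self (s := c) (by linarith) hs0 hs1
    simpa using this
  calc s * Real.log (1 + c) = Real.log ((1 + c) ^ s) := (Real.log_rpow h1c s).symm
    _ ≤ Real.log (1 + s * c) := Real.log_le_log (by positivity) hb

/-- combining the greedy selection bound with the information-gain bound:
under the hypotheses of Statements 5 and 6, if `Σ (1/2)·log(1 + v_{t-1}(x_t)/σ²) ≤ γ_T`,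
then the worst-case expected final variance is at most `C₁·γ_T/T` where
`C₁ = 2/log(1+σ⁻²)`. -/
theorem stmt_7 {X : Type*} [MeasurableSpace X] (T : ℕ) (hT : 1 ≤ T)
    (v : ℕ → X → ℝ) (hvm : ∀ t, Measurable (v t))
    (hv01 : ∀ t x, 0 ≤ v t x ∧ v t x ≤ 1)
    (hmono : ∀ t, 1 ≤ t → t ≤ T → ∀ x, v t x ≤ v (t - 1) x)
    (P : Set (Measure X)) (hP : ∀ p ∈ P, IsProbabilityMeasure p)
    (p : ℕ → Measure X) (hpP : ∀ t, 1 ≤ t → t ≤ T → p t ∈ P)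
    (x : ℕ → X)
    (hconstraint : ∀ t, 1 ≤ t → t ≤ T → (∫ y, v (t - 1) y ∂(p t)) ≤ v (t - 1) (x t))
    (hworst : ∀ t, 1 ≤ t → t ≤ T →
      (⨆ q : P, ∫ y, v (t - 1) y ∂(q : Measure X)) ≤ ∫ y, v (t - 1) y ∂(p t))
    (σsq γT : ℝ) (hσsq : 0 < σsq)
    (hIG : ∑ t ∈ Finset.Icc 1 T, (1 / 2 : ℝ) * Real.log (1 + v (t - 1) (x t) / σsq) ≤ γT) :
    (⨆ q : P, ∫ y, v T y ∂(q : Measure X)) ≤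
      (2 / Real.log (1 + σsq⁻¹)) * γT / T := by
  have hc : (0:ℝ) < σsq⁻¹ := inv_pos.mpr hσsq
  have hL : 0 < Real.log (1 + σsq⁻¹) := Real.log_pos (by linarith)
  have hγ : 0 ≤ γT := le_trans (Finset.sum_nonneg fun t _ => by
    have := (hv01 (t-1) (x t)).1
    have : 0 ≤ Real.log (1 + v (t-1) (x t) / σsq) :=
      Real.log_nonneg (by nlinarith [div_nonneg this hσsq.le])
    positivity) hIG
  have hT0 : (0:ℝ) < (T:ℝ) := by exact_mod_cast hT
  have hRHS : 0 ≤ (2 / Real.log (1 + σsq⁻¹)) * γT / T := by positivity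
  -- integrability
  have hint : ∀ (t : ℕ) (q : Measure X), IsProbabilityMeasure q → Integrable (v t) q := by
    intro t q hq
    exact (integrable_const (1:ℝ)).mono' (hvm t).aestronglyMeasurable
      (Filter.Eventually.of_forall fun y => by
        rw [Real.norm_eq_abs, abs_le]; exact ⟨by linarith [(hv01 t y).1], (hv01 t y).2⟩)
  rcases isEmpty_or_nonempty P with hE | hNE
  · rw [Real.iSup_of_isEmpty]; exact hRHS
  -- key: ∫ v T dq ≤ v (t-1) (x t) for each q ∈ P, t ∈ [1,T]
  have hkey : ∀ (q : P) (t : ℕ), 1 ≤ t → t ≤ T →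
      (∫ y, v T y ∂(q : Measure X)) ≤ v (t-1) (x t) := by
    intro q t ht1 htT
    have hq := hP q q.2
    have h1 : (∫ y, v T y ∂(q : Measure X)) ≤ ∫ y, v (t-1) y ∂(q : Measure X) := by
      apply integral_mono (hint T q hq) (hint (t-1) q hq)
      intro y
      -- v T y ≤ v (t-1) y by chaining hmono from t to T
      have : ∀ k, t ≤ k → k ≤ T → v k y ≤ v (t-1) y := by
        intro k
        induction k with
        | zero => intro h1 _; omega
        | succ n ih =>
          intro hn hnT
          rcases Nat.lt_or_ge t (n+1) with h | h
          · have := hmono (n+1) (by omega) hnT y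
            simp only [Nat.add_sub_cancel] at this
            exact le_trans this (ih (by omega) (by omega))
          · have ht : t = n + 1 := by omega
            subst ht
            simpa using hmono (n+1) (by omega) hnT y
      exact this T htT le_rfl
    have hbdd : BddAbove (Set.range fun q : P => ∫ y, v (t-1) y ∂(q : Measure X)) := by
      refine ⟨1, ?_⟩
      rintro r ⟨q', rfl⟩
      have hq' := hP q' q'.2
      calc (∫ y, v (t-1) y ∂(q' : Measure X)) ≤ ∫ _, (1:ℝ) ∂(q' : Measure X) :=
            integral_mono (hint (t-1) q' hq') (integrable_const 1) (fun y => (hv01 (t-1) y).2)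
        _ = 1 := by simp
    have h2 : (∫ y, v (t-1) y ∂(q : Measure X)) ≤ ⨆ q' : P, ∫ y, v (t-1) y ∂(q' : Measure X) :=
      le_ciSup hbdd q
    exact h1.trans (h2.trans ((hworst t ht1 htT).trans (hconstraint t ht1 htT)))
  apply ciSup_le
  intro q
  -- T * (∫ v T dq) ≤ Σ v (t-1) (x t) ≤ C₁ γT
  have hsum1 : (T:ℝ) * (∫ y, v T y ∂(q : Measure X)) ≤
      ∑ t ∈ Finset.Icc 1 T, v (t-1) (x t) := by
    calc (T:ℝ) * (∫ y, v T y ∂(q : Measure X))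
        = ∑ t ∈ Finset.Icc 1 T, (∫ y, v T y ∂(q : Measure X)) := by
          rw [Finset.sum_const, Nat.card_Icc]; simp
      _ ≤ ∑ t ∈ Finset.Icc 1 T, v (t-1) (x t) := by
          apply Finset.sum_le_sum
          intro t ht
          rw [Finset.mem_Icc] at ht
          exact hkey q t ht.1 ht.2
  have hsum2 : ∑ t ∈ Finset.Icc 1 T, v (t-1) (x t) ≤
      (2 / Real.log (1 + σsq⁻¹)) * γT := by
    have : ∑ t ∈ Finset.Icc 1 T, v (t-1) (x t) ≤
        (2 / Real.log (1 + σsq⁻¹)) *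
          ∑ t ∈ Finset.Icc 1 T, (1/2 : ℝ) * Real.log (1 + v (t-1) (x t) / σsq) := by
      rw [Finset.mul_sum]
      apply Finset.sum_le_sum
      intro t _
      have h1 := (hv01 (t-1) (x t)).1
      have h2 := (hv01 (t-1) (x t)).2
      have hk := key_log_ineq h1 h2 hc
      have hrw : v (t-1) (x t) / σsq = v (t-1) (x t) * σsq⁻¹ := div_eq_mul_inv _ _
      rw [hrw]
      rw [div_mul_eq_mul_div, div_mul_eq_mul_div, le_div_iff₀ hL]
      nlinarith
    exact this.trans (by
      apply mul_le_mul_of_nonneg_left hIG (by positivity))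
  rw [le_div_iff₀ hT0]
  calc (∫ y, v T y ∂(q : Measure X)) * (T:ℝ) = (T:ℝ) * (∫ y, v T y ∂(q : Measure X)) := mul_comm _ _
    _ ≤ (2 / Real.log (1 + σsq⁻¹)) * γT := hsum1.trans hsum2
end

section
/- If g : X → ℝ is L-Lipschitz (ℓ¹ norm), |g(x̄)| ≤ β^{1/2} σ(x̄) for all x̄ in a (1/τ)-dense subset X̄ of X (in ℓ¹ distance), and σ : X → ℝ≥0 is L_σ-Lipschitz (ℓ¹ norm), then for any probability measure p on X, ∫ g(x)² dp(x) ≤ 2β ∫ σ(x)² dp(x) + 2((β^{1/2} L_σ + L)/τ)². -/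
open MeasureTheory

/-- the expected squared error is bounded by `2β` times the expected squared
posterior standard deviation plus a discretization remainder:
`∫ g² dp ≤ 2β ∫ σ² dp + 2((β^{1/2}·L_σ + L)/τ)²`. -/
theorem stmt_12 (d : ℕ) [MeasurableSpace (Fin d → ℝ)] [BorelSpace (Fin d → ℝ)]
    (Xs Xb : Set (Fin d → ℝ)) (hsub : Xb ⊆ Xs)
    (τ L Lσ β : ℝ) (hτ : 0 < τ) (hL : 0 ≤ L) (hLσ : 0 ≤ Lσ) (hβ : 0 ≤ β)
    (nearest : (Fin d → ℝ) → (Fin d → ℝ))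
    (hnearest : ∀ x ∈ Xs, nearest x ∈ Xb ∧ ∑ i, |x i - nearest x i| ≤ 1 / τ)
    (g σ : (Fin d → ℝ) → ℝ) (hgm : Measurable g) (hσm : Measurable σ)
    (hσnn : ∀ x, 0 ≤ σ x)
    (hg : ∀ x ∈ Xs, ∀ y ∈ Xs, |g x - g y| ≤ L * ∑ i, |x i - y i|)
    (hσ : ∀ x ∈ Xs, ∀ y ∈ Xs, |σ x - σ y| ≤ Lσ * ∑ i, |x i - y i|)
    (hconf : ∀ xb ∈ Xb, |g xb| ≤ Real.sqrt β * σ xb)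
    (p : Measure (Fin d → ℝ)) [IsProbabilityMeasure p] (hpXs : p Xs = 1)
    (hgint : Integrable (fun x => (g x) ^ 2) p)
    (hσint : Integrable (fun x => (σ x) ^ 2) p) :
    (∫ x, (g x) ^ 2 ∂p) ≤
      2 * β * (∫ x, (σ x) ^ 2 ∂p) + 2 * ((Real.sqrt β * Lσ + L) / τ) ^ 2 := by

  set C : ℝ := 2 * ((Real.sqrt β * Lσ + L) / τ) ^ 2 with hCdef
  have hsb : (0:ℝ) ≤ Real.sqrt β := Real.sqrt_nonneg β
  have hββ : Real.sqrt β * Real.sqrt β = β := Real.mul_self_sqrt hβ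
  -- pointwise bound on Xs
  have key : ∀ x ∈ Xs, (g x) ^ 2 ≤ 2 * β * (σ x) ^ 2 + C := by
    intro x hx
    obtain ⟨hmem, hdist⟩ := hnearest x hx
    have hxb : nearest x ∈ Xs := hsub hmem
    have hdnn : (0:ℝ) ≤ ∑ i, |x i - nearest x i| :=
      Finset.sum_nonneg fun i _ => abs_nonneg _
    have h2 : |g x - g (nearest x)| ≤ L * (1 / τ) :=
      le_trans (hg x hx _ hxb) (by nlinarith)
    have h3 : |σ (nearest x) - σ x| ≤ Lσ * (1 / τ) := by
      refine le_trans (hσ _ hxb x hx) ?_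
      have : ∑ i, |nearest x i - x i| = ∑ i, |x i - nearest x i| := by
        exact Finset.sum_congr rfl fun i _ => abs_sub_comm _ _
      rw [this]; nlinarith
    have h4 : |g (nearest x)| ≤ Real.sqrt β * σ (nearest x) := hconf _ hmem
    have h5 : |g x| ≤ Real.sqrt β * σ x + (Real.sqrt β * Lσ + L) / τ := by
      have a1 := abs_sub_abs_le_abs_sub (g x) (g (nearest x))
      have a2 := abs_sub_abs_le_abs_sub (σ (nearest x)) (σ x)
      have hτ' : (0:ℝ) < τ := hτ
      have hσnx := hσnn (nearest x)
      have hax : σ (nearest x) ≤ σ x + Lσ * (1 / τ) := by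
        have := le_trans a2 h3
        have hσa : |σ (nearest x)| = σ (nearest x) := abs_of_nonneg hσnx
        have hσb : |σ x| = σ x := abs_of_nonneg (hσnn x)
        linarith [hσa ▸ hσb ▸ this]
      have : |g x| ≤ Real.sqrt β * (σ x + Lσ * (1 / τ)) + L * (1 / τ) := by
        nlinarith [abs_nonneg (g (nearest x))]
      calc |g x| ≤ Real.sqrt β * (σ x + Lσ * (1 / τ)) + L * (1 / τ) := this
        _ = Real.sqrt β * σ x + (Real.sqrt β * Lσ + L) / τ := by field_simp; ring
    have hgsq : (g x) ^ 2 = |g x| ^ 2 := (sq_abs (g x)).symm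
    have hBnn : (0:ℝ) ≤ (Real.sqrt β * Lσ + L) / τ := by positivity
    have hσx := hσnn x
    nlinarith [abs_nonneg (g x), sq_nonneg (Real.sqrt β * σ x - (Real.sqrt β * Lσ + L) / τ)]
  -- a.e. bound
  set S : Set (Fin d → ℝ) := {x | ¬ (g x) ^ 2 ≤ 2 * β * (σ x) ^ 2 + C} with hSdef
  have hSmeas : MeasurableSet S := by
    have : S = {x | 2 * β * (σ x) ^ 2 + C < (g x) ^ 2} := by
      ext x; simp [hSdef, not_le]
    rw [this]
    exact measurableSet_lt (((hσm.pow_const 2).const_mul (2 * β)).add_const C)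
      (hgm.pow_const 2)
  have hXsS : Xs ⊆ Sᶜ := fun x hx hxS => hxS (key x hx)
  have hScomp : p Sᶜ = 1 := le_antisymm prob_le_one (hpXs ▸ measure_mono hXsS)
  have hS0 : p S = 0 := by
    have h1 : p S + p Sᶜ = 1 := by
      rw [measure_add_measure_compl hSmeas]; exact measure_univ
    rw [hScomp] at h1
    have h2 : 1 + p S = 1 + 0 := by rw [add_zero, add_comm, h1]
    exact (ENNReal.add_right_inj ENNReal.one_ne_top).mp h2
  have hae : ∀ᵐ x ∂p, (g x) ^ 2 ≤ 2 * β * (σ x) ^ 2 + C := by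
    rw [ae_iff]; exact hS0
  have hint2 : Integrable (fun x => 2 * β * (σ x) ^ 2 + C) p :=
    (hσint.const_mul (2 * β)).add (integrable_const C)
  have hmono := integral_mono_ae hgint hint2 hae
  calc (∫ x, (g x) ^ 2 ∂p) ≤ ∫ x, (2 * β * (σ x) ^ 2 + C) ∂p := hmono
    _ = 2 * β * (∫ x, (σ x) ^ 2 ∂p) + C := by
        rw [integral_add (hσint.const_mul (2 * β)) (integrable_const C),
          integral_const_mul, integral_const]
        simp
end

section
/- Martingale-type averaging (abstract Kirschner–Krause lemma instance): let Y_1,...,Y_T be random variables adapted to a filtration (F_t) with 0 ≤ Y_t ≤ 1 almost surely, and m_t = E[Y_t | F_{t-1}]. Then with probability at least 1 - δ, Σ_{t=1}^T m_t ≤ 2 Σ_{t=1}^T Y_t + 4 log(1/δ) + 8 log 4 + 1. -/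
/-!
Chernoff bound for an exponential supermartingale. With `mₜ = E[Yₜ | Fₜ₋₁]`, the process
`exp (∑_{t ≤ n} (mₜ / 2 - log 2 * Yₜ))` is a supermartingale: conditionally on `Fₜ₋₁`,
convexity gives `E[2^{-Yₜ}] ≤ 1 - mₜ / 2`, and `exp (m / 2) * (1 - m / 2) ≤ 1`. Hence its
expectation is at most `1`, and Markov's inequality bounds the probability that the exponent
exceeds `log (1 / δ)` by `δ`. Off that event, `∑ mₜ < 2 log 2 ∑ Yₜ + 2 log (1 / δ)`.
-/

open MeasureTheory ProbabilityTheory Real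

lemma Real.exp_mul_one_sub_le_one (x : ℝ) : exp x * (1 - x) ≤ 1 := by
  calc exp x * (1 - x) ≤ exp x * exp (-x) := by gcongr; exact one_sub_le_exp_neg x
    _ = 1 := by rw [← exp_add, add_neg_cancel, exp_zero]

lemma Real.exp_neg_log_two_mul_le {y : ℝ} (h0 : 0 ≤ y) (h1 : y ≤ 1) :
    exp (-(log 2 * y)) ≤ 1 - y / 2 := by
  have hconv := convexOn_exp.2 (Set.mem_univ 0) (Set.mem_univ (-log 2))
    (by linarith : 0 ≤ 1 - y) h0 (by ring)
  have hhalf : exp (-log 2) = 1 / 2 := by rw [exp_neg, exp_log two_pos, one_div]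
  simp only [smul_eq_mul, mul_zero, zero_add, exp_zero, hhalf] at hconv
  rw [show -(log 2 * y) = y * -log 2 by ring]
  linarith

section SupermartingaleStep

variable {Ω : Type*} {m m0 : MeasurableSpace Ω} {μ : Measure Ω} {S Y : Ω → ℝ}

lemma integrable_exp_neg_mul [IsFiniteMeasure μ] (hY : AEStronglyMeasurable Y μ)
    (hY0 : ∀ᵐ ω ∂μ, 0 ≤ Y ω) {c : ℝ} (hc : 0 ≤ c) : Integrable (fun ω ↦ exp (-(c * Y ω))) μ :=
  .of_bound (continuous_exp.comp_aestronglyMeasurable (hY.const_mul c).neg) 1 <| by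
    filter_upwards [hY0] with ω h
    rw [norm_of_nonneg (exp_pos _).le, exp_le_one_iff, neg_nonpos]
    exact mul_nonneg hc h

lemma condExp_exp_neg_log_two_mul_le [IsFiniteMeasure μ] (hm : m ≤ m0)
    (hY : AEStronglyMeasurable Y μ) (hY01 : ∀ᵐ ω ∂μ, 0 ≤ Y ω ∧ Y ω ≤ 1) :
    μ[fun ω ↦ exp (-(log 2 * Y ω)) | m] ≤ᵐ[μ] fun ω ↦ 1 - μ[Y | m] ω / 2 := by
  have hYint : Integrable Y μ := .of_bound hY 1 <| by
    filter_upwards [hY01] with ω h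
    rw [norm_of_nonneg h.1]; exact h.2
  have hlin : μ[(fun _ ↦ 1) - (2⁻¹ : ℝ) • Y | m] =ᵐ[μ] fun ω ↦ 1 - μ[Y | m] ω / 2 := by
    filter_upwards [condExp_sub (integrable_const 1) (hYint.smul (2⁻¹ : ℝ)) m,
      condExp_smul (2⁻¹ : ℝ) Y m] with ω hsub hsmul
    simp only [hsub, hsmul, condExp_const hm, Pi.sub_apply, Pi.smul_apply, smul_eq_mul]
    ring
  have hψ := integrable_exp_neg_mul hY (hY01.mono fun _ h ↦ h.1) (log_nonneg one_le_two)
  refine (condExp_mono hψ ((integrable_const 1).sub (hYint.smul _)) ?_).trans hlin.le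
  filter_upwards [hY01] with ω h
  simpa [div_eq_inv_mul] using exp_neg_log_two_mul_le h.1 h.2

lemma integrable_exp_add_half_condExp_sub (hSint : Integrable (fun ω ↦ exp (S ω)) μ)
    (hY : AEStronglyMeasurable Y μ) (hY01 : ∀ᵐ ω ∂μ, 0 ≤ Y ω ∧ Y ω ≤ 1) :
    Integrable (fun ω ↦ exp (S ω + μ[Y | m] ω / 2 - log 2 * Y ω)) μ := by
  have hfactor : (fun ω ↦ exp (S ω + μ[Y | m] ω / 2 - log 2 * Y ω)) =
      fun ω ↦ exp (μ[Y | m] ω / 2 - log 2 * Y ω) * exp (S ω) := by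
    ext ω; rw [← exp_add]; ring_nf
  rw [hfactor]
  have hcond : AEMeasurable (μ[Y | m]) μ := integrable_condExp.aemeasurable
  refine hSint.bdd_mul (c := exp (1 / 2))
    ((hcond.div_const 2).sub (hY.aemeasurable.const_mul _)).exp.aestronglyMeasurable ?_
  have hY_abs : ∀ᵐ ω ∂μ, |Y ω| ≤ 1 := hY01.mono fun ω h ↦ abs_le.2 ⟨by linarith, h.2⟩
  filter_upwards [hY01, ae_bdd_abs_condExp_of_ae_bdd_abs (m := m) hY_abs] with ω hYω hcondω
  rw [norm_of_nonneg (exp_pos _).le, exp_le_exp]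
  have := (abs_le.1 hcondω).2
  have := mul_nonneg (log_nonneg one_le_two) hYω.1
  linarith

lemma integral_exp_add_half_condExp_sub_le [IsFiniteMeasure μ] (hm : m ≤ m0)
    (hS : StronglyMeasurable[m] S) (hSint : Integrable (fun ω ↦ exp (S ω)) μ)
    (hY : AEStronglyMeasurable Y μ) (hY01 : ∀ᵐ ω ∂μ, 0 ≤ Y ω ∧ Y ω ≤ 1) :
    ∫ ω, exp (S ω + μ[Y | m] ω / 2 - log 2 * Y ω) ∂μ ≤ ∫ ω, exp (S ω) ∂μ := by
  set φ : Ω → ℝ := fun ω ↦ exp (S ω + μ[Y | m] ω / 2)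
  set ψ : Ω → ℝ := fun ω ↦ exp (-(log 2 * Y ω))
  have hsplit : (fun ω ↦ exp (S ω + μ[Y | m] ω / 2 - log 2 * Y ω)) = φ * ψ := by
    ext ω; simp only [φ, ψ, Pi.mul_apply, ← exp_add]; ring_nf
  have hφ : StronglyMeasurable[m] φ :=
    (hS.measurable.add (stronglyMeasurable_condExp.measurable.div_const 2)).exp
      |>.stronglyMeasurable
  have hφψ : Integrable (φ * ψ) μ := hsplit ▸ integrable_exp_add_half_condExp_sub hSint hY hY01
  have hψ : Integrable ψ μ :=
    integrable_exp_neg_mul hY (hY01.mono fun _ h ↦ h.1) (log_nonneg one_le_two)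
  rw [hsplit, ← integral_condExp hm]
  refine integral_mono_ae integrable_condExp hSint ?_
  filter_upwards [condExp_mul_of_stronglyMeasurable_left hφ hφψ hψ,
    condExp_exp_neg_log_two_mul_le hm hY hY01] with ω hpull hψω
  rw [hpull, Pi.mul_apply]
  calc φ ω * μ[ψ | m] ω ≤ φ ω * (1 - μ[Y | m] ω / 2) := by gcongr
    _ = exp (S ω) * (exp (μ[Y | m] ω / 2) * (1 - μ[Y | m] ω / 2)) := by
      simp only [φ, exp_add]; ring
    _ ≤ exp (S ω) := mul_le_of_le_one_right (exp_pos _).le (exp_mul_one_sub_le_one _)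

end SupermartingaleStep

section ChernoffExponent

variable {Ω : Type*} {m0 : MeasurableSpace Ω} {μ : Measure Ω} {F : Filtration ℕ m0}
  {Y : ℕ → Ω → ℝ} {n : ℕ}

variable (μ F Y) in
noncomputable def chernoffExponent (n : ℕ) (ω : Ω) : ℝ :=
  ∑ t ∈ Finset.Icc 1 n, (μ[Y t | F (t - 1)] ω / 2 - log 2 * Y t ω)

lemma chernoffExponent_zero : chernoffExponent μ F Y 0 = 0 := by
  ext ω; simp [chernoffExponent]

lemma chernoffExponent_succ (n : ℕ) (ω : Ω) :
    chernoffExponent μ F Y (n + 1) ω =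
      chernoffExponent μ F Y n ω + μ[Y (n + 1) | F n] ω / 2 - log 2 * Y (n + 1) ω := by
  rw [chernoffExponent, Finset.sum_Icc_succ_top (by omega), Nat.add_sub_cancel, chernoffExponent]
  ring

lemma stronglyMeasurable_chernoffExponent
    (hadapted : ∀ t, 1 ≤ t → t ≤ n → StronglyMeasurable[F t] (Y t)) :
    StronglyMeasurable[F n] (chernoffExponent μ F Y n) := by
  refine (Finset.measurable_sum _ fun t ht ↦ ?_).stronglyMeasurable
  obtain ⟨ht1, htn⟩ := Finset.mem_Icc.1 ht
  exact ((stronglyMeasurable_condExp.mono (F.mono (by omega))).measurable.div_const 2).sub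
    (((hadapted t ht1 htn).mono (F.mono htn)).measurable.const_mul _)

lemma integrable_exp_chernoffExponent [IsFiniteMeasure μ]
    (hadapted : ∀ t, 1 ≤ t → t ≤ n → StronglyMeasurable[F t] (Y t))
    (hbound : ∀ t, 1 ≤ t → t ≤ n → ∀ᵐ ω ∂μ, 0 ≤ Y t ω ∧ Y t ω ≤ 1) :
    Integrable (fun ω ↦ exp (chernoffExponent μ F Y n ω)) μ := by
  induction n with
  | zero => simp [chernoffExponent_zero]
  | succ n ih =>
    simp_rw [chernoffExponent_succ]
    exact integrable_exp_add_half_condExp_sub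
      (ih (fun t h1 h2 ↦ hadapted t h1 (by omega)) (fun t h1 h2 ↦ hbound t h1 (by omega)))
      ((hadapted (n + 1) (by omega) le_rfl).mono (F.le _)).aestronglyMeasurable
      (hbound (n + 1) (by omega) le_rfl)

lemma integral_exp_chernoffExponent_le_one [IsProbabilityMeasure μ]
    (hadapted : ∀ t, 1 ≤ t → t ≤ n → StronglyMeasurable[F t] (Y t))
    (hbound : ∀ t, 1 ≤ t → t ≤ n → ∀ᵐ ω ∂μ, 0 ≤ Y t ω ∧ Y t ω ≤ 1) :
    ∫ ω, exp (chernoffExponent μ F Y n ω) ∂μ ≤ 1 := by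
  induction n with
  | zero => simp [chernoffExponent_zero]
  | succ n ih =>
    have hadapted' : ∀ t, 1 ≤ t → t ≤ n → StronglyMeasurable[F t] (Y t) :=
      fun t h1 h2 ↦ hadapted t h1 (by omega)
    have hbound' : ∀ t, 1 ≤ t → t ≤ n → ∀ᵐ ω ∂μ, 0 ≤ Y t ω ∧ Y t ω ≤ 1 :=
      fun t h1 h2 ↦ hbound t h1 (by omega)
    simp_rw [chernoffExponent_succ]
    refine (integral_exp_add_half_condExp_sub_le (F.le n)
      (stronglyMeasurable_chernoffExponent hadapted')
      (integrable_exp_chernoffExponent hadapted' hbound')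
      ((hadapted (n + 1) (by omega) le_rfl).mono (F.le _)).aestronglyMeasurable
      (hbound (n + 1) (by omega) le_rfl)).trans (ih hadapted' hbound')

lemma measureReal_le_chernoffExponent_le [IsProbabilityMeasure μ]
    (hadapted : ∀ t, 1 ≤ t → t ≤ n → StronglyMeasurable[F t] (Y t))
    (hbound : ∀ t, 1 ≤ t → t ≤ n → ∀ᵐ ω ∂μ, 0 ≤ Y t ω ∧ Y t ω ≤ 1) (L : ℝ) :
    μ.real {ω | L ≤ chernoffExponent μ F Y n ω} ≤ exp (-L) := by
  calc μ.real {ω | L ≤ chernoffExponent μ F Y n ω}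
      ≤ exp (-1 * L) * mgf (chernoffExponent μ F Y n) μ 1 :=
        measure_ge_le_exp_mul_mgf L zero_le_one
          (by simpa using integrable_exp_chernoffExponent hadapted hbound)
    _ ≤ exp (-L) * 1 := by
        rw [neg_one_mul]
        gcongr
        simpa [mgf] using integral_exp_chernoffExponent_le_one hadapted hbound
    _ = exp (-L) := mul_one _

lemma sum_condExp_le_of_chernoffExponent_lt {ω : Ω} {L : ℝ}
    (hY : ∀ t ∈ Finset.Icc 1 n, 0 ≤ Y t ω) (h : chernoffExponent μ F Y n ω < L) :
    ∑ t ∈ Finset.Icc 1 n, μ[Y t | F (t - 1)] ω ≤ 2 * ∑ t ∈ Finset.Icc 1 n, Y t ω + 2 * L := by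
  rw [chernoffExponent, Finset.sum_sub_distrib, ← Finset.sum_div, ← Finset.mul_sum] at h
  have hsum : 0 ≤ ∑ t ∈ Finset.Icc 1 n, Y t ω := Finset.sum_nonneg hY
  have hlog : log 2 < 1 := log_two_lt_d9.trans (by norm_num)
  nlinarith

lemma one_sub_le_measure_sum_condExp_le [IsProbabilityMeasure μ]
    (hadapted : ∀ t, 1 ≤ t → t ≤ n → StronglyMeasurable[F t] (Y t))
    (hbound : ∀ t, 1 ≤ t → t ≤ n → ∀ᵐ ω ∂μ, 0 ≤ Y t ω ∧ Y t ω ≤ 1) {δ : ℝ} (hδ : 0 < δ) :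
    ENNReal.ofReal (1 - δ) ≤ μ {ω | ∑ t ∈ Finset.Icc 1 n, μ[Y t | F (t - 1)] ω ≤
      2 * ∑ t ∈ Finset.Icc 1 n, Y t ω + 2 * log (1 / δ)} := by
  set B : Set Ω := {ω | log (1 / δ) ≤ chernoffExponent μ F Y n ω}
  have hB : MeasurableSet B := measurableSet_le measurable_const
    ((stronglyMeasurable_chernoffExponent hadapted).mono (F.le n)).measurable
  have hμB : μ B ≤ ENNReal.ofReal δ := by
    have h := measureReal_le_chernoffExponent_le hadapted hbound (log (1 / δ))
    rwa [exp_neg, exp_log (by positivity), inv_div, div_one, measureReal_def,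
      ← ENNReal.le_ofReal_iff_toReal_le (measure_ne_top _ _) hδ.le] at h
  have hY0 : ∀ᵐ ω ∂μ, ∀ t ∈ Finset.Icc 1 n, 0 ≤ Y t ω :=
    (Filter.eventually_all_finset _).2 fun t ht ↦
      (hbound t (Finset.mem_Icc.1 ht).1 (Finset.mem_Icc.1 ht).2).mono fun _ h ↦ h.1
  calc ENNReal.ofReal (1 - δ) = 1 - ENNReal.ofReal δ := by
        rw [ENNReal.ofReal_sub _ hδ.le, ENNReal.ofReal_one]
    _ ≤ 1 - μ B := by gcongr
    _ = μ Bᶜ := (prob_compl_eq_one_sub hB).symm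
    _ ≤ _ := measure_mono_ae <| by
        filter_upwards [hY0] with ω hYω hωB
        exact sum_condExp_le_of_chernoffExponent_lt hYω (not_le.1 hωB)

end ChernoffExponent

/-- martingale-type averaging (Kirschner–Krause lemma with `b_t = 1`):
for `[0,1]`-valued adapted `Y_t` with `m_t = E[Y_t | F_{t-1}]`, with probability at
least `1 - δ`, `Σ m_t ≤ 2 Σ Y_t + 4 log(1/δ) + 8 log 4 + 1`. -/
theorem stmt_19 {Ω : Type*} {m0 : MeasurableSpace Ω} (Pr : Measure Ω)
    [IsProbabilityMeasure Pr] (T : ℕ) (F : Filtration ℕ m0) (Y : ℕ → Ω → ℝ)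
    (hadapted : ∀ t, 1 ≤ t → t ≤ T → StronglyMeasurable[F t] (Y t))
    (hbound : ∀ t, 1 ≤ t → t ≤ T → ∀ᵐ ω ∂Pr, 0 ≤ Y t ω ∧ Y t ω ≤ 1)
    (δ : ℝ) (hδ : 0 < δ) (hδ1 : δ < 1) :
    ENNReal.ofReal (1 - δ) ≤
      Pr {ω | ∑ t ∈ Finset.Icc 1 T, (Pr[Y t | F (t - 1)]) ω ≤
        2 * ∑ t ∈ Finset.Icc 1 T, Y t ω + 4 * Real.log (1 / δ) + 8 * Real.log 4 + 1} := by
  refine (one_sub_le_measure_sum_condExp_le hadapted hbound hδ).trans (measure_mono fun ω hω ↦ ?_)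
  have hL : 0 ≤ log (1 / δ) := log_nonneg (one_le_one_div hδ hδ1.le)
  have hlog4 : 0 < log 4 := log_pos (by norm_num)
  simp only [Set.mem_ofPred_eq] at hω ⊢
  linarith
end
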